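/- Under the orthogonality setting, the completeness relation J_x^{#A} J_x + J_ξ^{#A} J_ξ = I_n holds. -/

import Mathlib

/-! `J^{#A}` is a right inverse of `J` that is annihilated by every `K` with `K A⁻¹ Jᵀ = 0`, and
since `A⁻¹` is symmetric the orthogonality of `Jx` and `Jξ` goes both ways. So the square
matrix `[Jx; Jξ]` has right inverse `[Jx^{#A}, Jξ^{#A}]`, which is then also a left inverse;
expanding that product by blocks gives `Jx^{#A} Jx + Jξ^{#A} Jξ = 1`. -/

open Matrix

/-- The `A`-weighted generalized pseudo-inverse `J^{#A} = A⁻¹ Jᵀ (J A⁻¹ Jᵀ)⁻¹`. -/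
noncomputable def weightedPseudoInv {n m : ℕ} (A : Matrix (Fin n) (Fin n) ℝ)
    (J : Matrix (Fin m) (Fin n) ℝ) : Matrix (Fin n) (Fin m) ℝ :=
  A⁻¹ * Jᵀ * (J * A⁻¹ * Jᵀ)⁻¹

namespace Matrix

theorem IsSymm.transpose_mul_mul_transpose {R : Type*} [CommRing R] {n m k : Type*} [Fintype n]
    {A : Matrix n n R} (hA : A.IsSymm) (J : Matrix m n R) (K : Matrix k n R) :
    (J * A * Kᵀ)ᵀ = K * A * Jᵀ := by
  rw [transpose_mul, transpose_mul, transpose_transpose, hA.eq, Matrix.mul_assoc]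

theorem add_mul_eq_one_of_mul_eq_one_of_mul_eq_zero {R : Type*} [CommRing R] {n m₁ m₂ : Type*}
    [Fintype n] [Fintype m₁] [Fintype m₂] [DecidableEq n] [DecidableEq m₁] [DecidableEq m₂]
    (e : n ≃ m₁ ⊕ m₂) {B₁ : Matrix m₁ n R} {B₂ : Matrix m₂ n R}
    {C₁ : Matrix n m₁ R} {C₂ : Matrix n m₂ R}
    (h₁₁ : B₁ * C₁ = 1) (h₁₂ : B₁ * C₂ = 0) (h₂₁ : B₂ * C₁ = 0) (h₂₂ : B₂ * C₂ = 1) :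
    C₁ * B₁ + C₂ * B₂ = 1 := by
  rw [← fromCols_mul_fromRows, fromCols_mul_fromRows_eq_one_comm e, fromRows_mul_fromCols,
    h₁₁, h₁₂, h₂₁, h₂₂, fromBlocks_one]

end Matrix

section WeightedPseudoInv

variable {n m k : ℕ} {A : Matrix (Fin n) (Fin n) ℝ} {J : Matrix (Fin m) (Fin n) ℝ}

theorem mul_weightedPseudoInv (hJ : IsUnit (J * A⁻¹ * Jᵀ)) : J * weightedPseudoInv A J = 1 := by
  rw [weightedPseudoInv, ← Matrix.mul_assoc, ← Matrix.mul_assoc]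
  exact mul_nonsing_inv _ ((isUnit_iff_isUnit_det _).mp hJ)

theorem mul_weightedPseudoInv_eq_zero {K : Matrix (Fin k) (Fin n) ℝ} (hKJ : K * A⁻¹ * Jᵀ = 0) :
    K * weightedPseudoInv A J = 0 := by
  rw [weightedPseudoInv, ← Matrix.mul_assoc, ← Matrix.mul_assoc, hKJ, Matrix.zero_mul]

end WeightedPseudoInv

/-- In the orthogonality setting, the completeness relation
`Jx^{#A} Jx + Jξ^{#A} Jξ = I` holds. -/
theorem completeness_relation {m r : ℕ}
    (A : Matrix (Fin (m + r)) (Fin (m + r)) ℝ) (hA : A.PosDef)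
    (Jx : Matrix (Fin m) (Fin (m + r)) ℝ) (Jξ : Matrix (Fin r) (Fin (m + r)) ℝ)
    (hx : IsUnit (Jx * A⁻¹ * Jxᵀ)) (hξ : IsUnit (Jξ * A⁻¹ * Jξᵀ))
    (horth : Jx * A⁻¹ * Jξᵀ = 0) :
    weightedPseudoInv A Jx * Jx + weightedPseudoInv A Jξ * Jξ =
      (1 : Matrix (Fin (m + r)) (Fin (m + r)) ℝ) := by
  have hAinv : A⁻¹.IsSymm := (isHermitian_iff_isSymm.mp hA.isHermitian).inv
  have horth' : Jξ * A⁻¹ * Jxᵀ = 0 := by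
    rw [← hAinv.transpose_mul_mul_transpose, horth, transpose_zero]
  exact add_mul_eq_one_of_mul_eq_one_of_mul_eq_zero finSumFinEquiv.symm
    (mul_weightedPseudoInv hx) (mul_weightedPseudoInv_eq_zero horth)
    (mul_weightedPseudoInv_eq_zero horth') (mul_weightedPseudoInv hξ)
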